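/- There exists an absolute constant C > 0 such that for all integers n ≥ 0: E_n ≤ C (n+1)^{−1/2}, and for all integers 0 ≤ k ≤ n: 0 ≤ E_{n−k} − E_n ≤ C · k · (n+1)^{−1} (n−k+1)^{−1/2}. -/

import Mathlib

/-- `E_m = (2m)! / (2^{2m} (m!)^2) = C(2m,m) / 4^m`. -/
noncomputable def Ecoef (m : ℕ) : ℝ := (Nat.choose (2 * m) m : ℝ) / 4 ^ m

lemma Ecoef_pos (m : ℕ) : 0 < Ecoef m := by
  have h : 0 < Nat.choose (2 * m) m := Nat.choose_pos (by omega)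
  unfold Ecoef
  positivity

lemma Ecoef_succ (m : ℕ) : Ecoef (m + 1) = Ecoef m * (2 * (m : ℝ) + 1) / (2 * m + 2) := by
  have h := Nat.succ_mul_centralBinom_succ m
  have h2 : ((m : ℝ) + 1) * (Nat.choose (2 * (m + 1)) (m + 1) : ℝ)
      = 2 * (2 * m + 1) * (Nat.choose (2 * m) m : ℝ) := by
    have := congrArg (fun x : ℕ => (x : ℝ)) h
    simp only [Nat.centralBinom] at this
    push_cast at this ⊢
    convert this using 3 <;> ring
  unfold Ecoef
  have hm1 : (m : ℝ) + 1 ≠ 0 := by positivity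
  have h4 : (4 : ℝ) ^ (m + 1) = 4 ^ m * 4 := by ring
  rw [h4]
  field_simp
  nlinarith [h2, pow_pos (show (0:ℝ) < 4 by norm_num) m]

lemma Ecoef_diff (m : ℕ) : Ecoef m - Ecoef (m + 1) = Ecoef m / (2 * (m : ℝ) + 2) := by
  rw [Ecoef_succ]
  have : (2 * (m : ℝ) + 2) ≠ 0 := by positivity
  field_simp
  ring

lemma Ecoef_anti : ∀ {m n : ℕ}, m ≤ n → Ecoef n ≤ Ecoef m := by
  intro m n h
  induction n with
  | zero => simp_all
  | succ n ih =>
    rcases Nat.lt_or_ge m (n + 1) with h' | h'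
    · have := ih (by omega)
      have hd := Ecoef_diff n
      have := Ecoef_pos n
      have h2 : (0:ℝ) < 2 * (n : ℝ) + 2 := by positivity
      nlinarith [div_pos (Ecoef_pos n) h2]
    · have : m = n + 1 := by omega
      simp [this]

lemma Ecoef_sq_le (m : ℕ) : Ecoef m ^ 2 * ((m : ℝ) + 1) ≤ 1 := by
  induction m with
  | zero => simp [Ecoef]
  | succ m ih =>
    rw [Ecoef_succ]
    have h2 : (0:ℝ) < 2 * (m : ℝ) + 2 := by positivity
    rw [div_pow]
    have hE := Ecoef_pos m
    have key : (2 * (m:ℝ) + 1) ^ 2 * ((m:ℝ) + 1 + 1) ≤ (2 * (m:ℝ) + 2) ^ 2 * ((m:ℝ) + 1) := by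
      nlinarith [Nat.cast_nonneg (α := ℝ) m]
    push_cast
    rw [div_mul_eq_mul_div, div_le_one (by positivity)]
    nlinarith [sq_nonneg (Ecoef m), mul_le_mul_of_nonneg_left key (sq_nonneg (Ecoef m)), ih,
      mul_pos (mul_pos hE hE) h2]

lemma Ecoef_le_sqrt (m : ℕ) : Ecoef m ≤ 1 / Real.sqrt ((m : ℝ) + 1) := by
  have h1 : (0:ℝ) < (m : ℝ) + 1 := by positivity
  have hs : 0 < Real.sqrt ((m : ℝ) + 1) := Real.sqrt_pos.mpr h1
  rw [le_div_iff₀ hs]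
  have hE := (Ecoef_pos m).le
  nlinarith [Ecoef_sq_le m, Real.sq_sqrt h1.le, Real.sqrt_nonneg ((m:ℝ)+1),
    sq_nonneg (Ecoef m * Real.sqrt ((m:ℝ)+1) - 1)]

lemma step_ineq (a : ℝ) (ha : 1 ≤ a) :
    1 / (2 * a * Real.sqrt a) ≤ 3 / Real.sqrt a - 3 / Real.sqrt (a + 1) := by
  have ha0 : (0:ℝ) < a := by linarith
  have ha1 : (0:ℝ) < a + 1 := by linarith
  set s := Real.sqrt a with hsdef
  set t := Real.sqrt (a + 1) with htdef
  have hs : 0 < s := Real.sqrt_pos.mpr ha0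
  have ht : 0 < t := Real.sqrt_pos.mpr ha1
  have hs2 : s ^ 2 = a := Real.sq_sqrt ha0.le
  have ht2 : t ^ 2 = a + 1 := Real.sq_sqrt ha1.le
  have hst : s ≤ t := Real.sqrt_le_sqrt (by linarith)
  have h3 : 3 / s - 3 / t = 3 * (t - s) / (s * t) := by field_simp
  rw [h3, div_le_div_iff₀ (by positivity) (by positivity)]
  -- goal: 1 * (s * t) ≤ 3 * (t - s) * (2 * a * s)
  have h4 : (t - s) * (t + s) = 1 := by nlinarith
  have hub : s * t ≤ a + 1 / 2 := by nlinarith [sq_nonneg (t - s)]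
  nlinarith [mul_pos hs ht, mul_le_mul_of_nonneg_left hub (by linarith : (0:ℝ) ≤ 6 * a - 1),
    sq_nonneg (s * t - a - 1/5), mul_nonneg (mul_nonneg hs.le ht.le) (sub_nonneg.mpr hst)]

lemma key_ineq (m : ℕ) : ∀ n, m ≤ n →
    Ecoef m - Ecoef n ≤ 3 / Real.sqrt ((m : ℝ) + 1) - 3 / Real.sqrt ((n : ℝ) + 1) := by
  intro n hn
  induction n, hn using Nat.le_induction with
  | base => simp
  | succ n hn ih =>
    have hd := Ecoef_diff n
    have h1 : (1:ℝ) ≤ (n : ℝ) + 1 := by have := Nat.cast_nonneg (α := ℝ) n; linarith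
    have hstep := step_ineq ((n : ℝ) + 1) h1
    have hE : Ecoef n ≤ 1 / Real.sqrt ((n : ℝ) + 1) := Ecoef_le_sqrt n
    have hs : 0 < Real.sqrt ((n : ℝ) + 1) := Real.sqrt_pos.mpr (by positivity)
    have hdle : Ecoef n - Ecoef (n + 1) ≤ 1 / (2 * ((n:ℝ) + 1) * Real.sqrt ((n : ℝ) + 1)) := by
      rw [hd]
      rw [div_le_div_iff₀ (by positivity) (by positivity)]
      calc Ecoef n * (2 * ((n:ℝ) + 1) * Real.sqrt ((n : ℝ) + 1))
          ≤ 1 / Real.sqrt ((n : ℝ) + 1) * (2 * ((n:ℝ) + 1) * Real.sqrt ((n : ℝ) + 1)) := by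
            apply mul_le_mul_of_nonneg_right hE (by positivity)
        _ = 1 * (2 * (n:ℝ) + 2) := by field_simp
    have hcast : ((n + 1 : ℕ) : ℝ) + 1 = ((n : ℝ) + 1) + 1 := by push_cast; ring
    rw [hcast]
    linarith [hstep, ih, hdle]

lemma sqrt_diff_ineq (b c : ℝ) (hb : 0 < b) (hbc : b ≤ c) :
    1 / Real.sqrt b - 1 / Real.sqrt c ≤ (c - b) / (c * Real.sqrt b) := by
  have hc : 0 < c := lt_of_lt_of_le hb hbc
  set s := Real.sqrt b
  set t := Real.sqrt c
  have hs : 0 < s := Real.sqrt_pos.mpr hb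
  have ht : 0 < t := Real.sqrt_pos.mpr hc
  have hs2 : s ^ 2 = b := Real.sq_sqrt hb.le
  have ht2 : t ^ 2 = c := Real.sq_sqrt hc.le
  have hst : s ≤ t := Real.sqrt_le_sqrt hbc
  have h3 : 1 / s - 1 / t = (t - s) / (s * t) := by field_simp
  rw [h3, div_le_div_iff₀ (by positivity) (by positivity)]
  nlinarith [mul_nonneg (sub_nonneg.mpr hst) (mul_nonneg hs.le (mul_nonneg hs.le ht.le)),
    mul_nonneg (sub_nonneg.mpr hst) hs.le]

lemma rpow_neg_half (x : ℝ) (hx : 0 < x) : x ^ (-(1:ℝ) / 2) = 1 / Real.sqrt x := by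
  rw [show (-(1:ℝ) / 2) = -(1/2) by ring, Real.rpow_neg hx.le, ← Real.sqrt_eq_rpow,
    one_div]

/-- There is an absolute constant `C > 0` with `E_n ≤ C (n+1)^{-1/2}` and, for `0 ≤ k ≤ n`,
`0 ≤ E_{n-k} - E_n ≤ C k (n+1)⁻¹ (n-k+1)^{-1/2}`. -/
theorem stmt1 : ∃ C : ℝ, 0 < C ∧
    (∀ n : ℕ, Ecoef n ≤ C * ((n : ℝ) + 1) ^ (-(1 : ℝ) / 2)) ∧
    (∀ k n : ℕ, k ≤ n →
      0 ≤ Ecoef (n - k) - Ecoef n ∧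
      Ecoef (n - k) - Ecoef n
        ≤ C * (k : ℝ) * ((n : ℝ) + 1)⁻¹ * ((n : ℝ) - (k : ℝ) + 1) ^ (-(1 : ℝ) / 2)) := by
  refine ⟨3, by norm_num, ?_, ?_⟩
  · intro n
    have h1 : (0:ℝ) < (n:ℝ) + 1 := by positivity
    rw [rpow_neg_half _ h1]
    have hs : 0 < Real.sqrt ((n : ℝ) + 1) := Real.sqrt_pos.mpr h1
    have := Ecoef_le_sqrt n
    nlinarith [div_pos (show (0:ℝ) < 1 by norm_num) hs]
  · intro k n hk
    have hmono : Ecoef n ≤ Ecoef (n - k) := Ecoef_anti (Nat.sub_le n k)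
    refine ⟨by linarith, ?_⟩
    set m := n - k with hm
    have hcast : (m : ℝ) = (n : ℝ) - (k : ℝ) := by
      rw [hm, Nat.cast_sub hk]
    have hb : (0:ℝ) < (m : ℝ) + 1 := by positivity
    have hc : (0:ℝ) < (n : ℝ) + 1 := by positivity
    have hbc : (m : ℝ) + 1 ≤ (n : ℝ) + 1 := by
      have : (m : ℝ) ≤ (n : ℝ) := Nat.cast_le.mpr (Nat.sub_le n k)
      linarith
    have hkey := key_ineq m n (Nat.sub_le n k)
    have hsd := sqrt_diff_ineq ((m:ℝ)+1) ((n:ℝ)+1) hb hbc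
    have hkk : ((n:ℝ) + 1) - ((m:ℝ) + 1) = (k : ℝ) := by rw [hcast]; ring
    rw [show (n : ℝ) - (k : ℝ) + 1 = (m:ℝ) + 1 by rw [hcast], rpow_neg_half _ hb]
    have hs : 0 < Real.sqrt ((m : ℝ) + 1) := Real.sqrt_pos.mpr hb
    have : Ecoef m - Ecoef n ≤ 3 * (((n:ℝ)+1 - ((m:ℝ)+1)) / (((n:ℝ)+1) * Real.sqrt ((m:ℝ)+1))) := by
      have he : 3 / Real.sqrt ((m:ℝ)+1) - 3 / Real.sqrt ((n:ℝ)+1)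
          = 3 * (1 / Real.sqrt ((m:ℝ)+1) - 1 / Real.sqrt ((n:ℝ)+1)) := by ring
      have h6 := mul_le_mul_of_nonneg_left hsd (by norm_num : (0:ℝ) ≤ 3)
      linarith [hkey, he.le, he.ge]
    rw [hkk] at this
    calc Ecoef m - Ecoef n ≤ 3 * ((k:ℝ) / (((n:ℝ)+1) * Real.sqrt ((m:ℝ)+1))) := this
      _ = 3 * (k:ℝ) * ((n:ℝ)+1)⁻¹ * (1 / Real.sqrt ((m:ℝ)+1)) := by field_simp
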